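/- arXiv:1908.05753 — 2 statements merged into one kernel-verified Lean document; each statement's English description precedes it below -/
import Mathlib

section
/- Let d ≥ 4 be an integer, m an integer with 1 ≤ m < d/2, 0 < κ < 1/2, R > 1, and c = 1/1000. If x ∈ Λ and ξ ∈ Ω (with Λ, Ω as in the context), then the real number R x·ξ lies in 2πℤ + (-1/100, 1/100), i.e., there exists k ∈ ℤ with |R x·ξ - 2πk| < 1/100. -/
open MeasureTheory Metric Real
open scoped ENNReal

/-- The vector in `ℝ^n` with integer coordinates `ℓ`. -/
noncomputable def intVec {n : ℕ} (ℓ : Fin n → ℤ) : EuclideanSpace ℝ (Fin n) :=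
  (EuclideanSpace.equiv (Fin n) ℝ).symm fun i => (ℓ i : ℝ)

/-- The first `m` coordinates `x'` of a vector `x ∈ ℝ^n`. -/
noncomputable def headV {n : ℕ} (m : ℕ) (h : m ≤ n) (x : EuclideanSpace ℝ (Fin n)) :
    EuclideanSpace ℝ (Fin m) :=
  (EuclideanSpace.equiv (Fin m) ℝ).symm fun i => x (Fin.castLE h i)

/-- The last `n - m` coordinates `x''` of a vector `x ∈ ℝ^n`. -/
noncomputable def tailV {n : ℕ} (m : ℕ) (x : EuclideanSpace ℝ (Fin n)) :
    EuclideanSpace ℝ (Fin (n - m)) :=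
  (EuclideanSpace.equiv (Fin (n - m)) ℝ).symm fun i =>
    x ⟨m + i, by have := i.isLt; omega⟩

/-- The set `Ω = [B^m(0, cR^{-1/2}) × (Γ + B^{d-m}(0, cR^{-1}))] ∩ S^{d-1}`, where
`Γ = {ω ∈ S^{d-m-1} : R^κ ω ∈ 2πℤ^{d-m}}` and `c = 1/1000`. -/
noncomputable def OmegaS (d m : ℕ) (h : m ≤ d) (κ R : ℝ) :
    Set (EuclideanSpace ℝ (Fin d)) :=
  {ξ | ξ ∈ sphere (0 : EuclideanSpace ℝ (Fin d)) 1 ∧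
    ‖headV m h ξ‖ < (1 / 1000) * R ^ (-(1 : ℝ) / 2) ∧
    ∃ n : Fin (d - m) → ℤ,
      ‖(2 * π * R ^ (-κ)) • intVec n‖ = 1 ∧
      ‖tailV m ξ - (2 * π * R ^ (-κ)) • intVec n‖ < (1 / 1000) * R ^ (-(1 : ℝ))}

/-- The set `Λ = [B^m(0, cR^{-1/2}) × (R^{κ-1}ℤ^{d-m} + B^{d-m}(0, cR^{-1}))] ∩ B^d(0,1)`,
with `c = 1/1000`. -/
noncomputable def LambdaS (d m : ℕ) (h : m ≤ d) (κ R : ℝ) :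
    Set (EuclideanSpace ℝ (Fin d)) :=
  {x | x ∈ ball (0 : EuclideanSpace ℝ (Fin d)) 1 ∧
    ‖headV m h x‖ < (1 / 1000) * R ^ (-(1 : ℝ) / 2) ∧
    ∃ ℓ : Fin (d - m) → ℤ,
      ‖tailV m x - R ^ (κ - 1) • intVec ℓ‖ < (1 / 1000) * R ^ (-(1 : ℝ))}

/-- `c_α(μ) = sup_{x, r>0} μ(B(x,r)) / r^α`, valued in `ℝ≥0∞`. -/
noncomputable def cAlpha {d : ℕ} (α : ℝ) (μ : Measure (EuclideanSpace ℝ (Fin d))) : ℝ≥0∞ :=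
  ⨆ (x : EuclideanSpace ℝ (Fin d)) (r : ℝ) (_ : 0 < r),
    μ (ball x r) / ENNReal.ofReal (r ^ α)

lemma sum_split {d : ℕ} (m : ℕ) (h : m ≤ d) (g : Fin d → ℝ) :
    ∑ i, g i = (∑ i : Fin m, g (Fin.castLE h i))
      + ∑ i : Fin (d - m), g ⟨m + i, by have := i.isLt; omega⟩ := by
  classical
  set G : ℕ → ℝ := fun j => if hj : j < d then g ⟨j, hj⟩ else 0 with hG
  have h1 : ∑ i, g i = ∑ j ∈ Finset.range d, G j := by
    rw [← Fin.sum_univ_eq_sum_range]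
    exact Finset.sum_congr rfl fun i _ => by simp [hG, i.isLt]
  have h2 : ∑ j ∈ Finset.range m, G j = ∑ i : Fin m, g (Fin.castLE h i) := by
    rw [← Fin.sum_univ_eq_sum_range]
    refine Finset.sum_congr rfl fun i _ => ?_
    have hi : (i : ℕ) < d := lt_of_lt_of_le i.isLt h
    simp only [hG, dif_pos hi]
    rfl
  have h3 : ∑ j ∈ Finset.range (d - m), G (m + j)
      = ∑ i : Fin (d - m), g ⟨m + i, by have := i.isLt; omega⟩ := by
    rw [← Fin.sum_univ_eq_sum_range]
    refine Finset.sum_congr rfl fun i _ => ?_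
    have hi : m + (i : ℕ) < d := by have := i.isLt; omega
    simp only [hG, dif_pos hi]
  have hr : Finset.range d = Finset.range (m + (d - m)) := by congr 1; omega
  rw [h1, hr, Finset.sum_range_add, h2, h3]

lemma inner_split {d : ℕ} (m : ℕ) (h : m ≤ d) (x ξ : EuclideanSpace ℝ (Fin d)) :
    (inner ℝ x ξ : ℝ) = (inner ℝ (headV m h x) (headV m h ξ) : ℝ)
      + (inner ℝ (tailV m x) (tailV m ξ) : ℝ) := by
  simp only [PiLp.inner_apply, RCLike.inner_apply, conj_trivial]
  exact sum_split m h fun i => ξ i * x i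

lemma inner_intVec {n : ℕ} (ℓ nn : Fin n → ℤ) :
    (inner ℝ (intVec ℓ) (intVec nn) : ℝ) = ((∑ i, ℓ i * nn i : ℤ) : ℝ) := by
  simp [PiLp.inner_apply, RCLike.inner_apply, intVec, mul_comm]

lemma tail_norm_le {d : ℕ} (m : ℕ) (h : m ≤ d) (x : EuclideanSpace ℝ (Fin d)) :
    ‖tailV m x‖ ≤ ‖x‖ := by
  have := inner_split m h x x
  rw [real_inner_self_eq_norm_sq, real_inner_self_eq_norm_sq,
    real_inner_self_eq_norm_sq] at this
  nlinarith [norm_nonneg (tailV m x), norm_nonneg x, sq_nonneg ‖headV m h x‖]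

theorem stmt11 (d m : ℕ) (hd : 4 ≤ d) (hm1 : 1 ≤ m) (hm2 : 2 * m < d)
    (κ : ℝ) (hκ1 : 0 < κ) (hκ2 : κ < 1 / 2) (R : ℝ) (hR : 1 < R)
    (x ξ : EuclideanSpace ℝ (Fin d))
    (hx : x ∈ LambdaS d m (by omega) κ R) (hξ : ξ ∈ OmegaS d m (by omega) κ R) :
    ∃ k : ℤ, |R * (inner ℝ x ξ : ℝ) - 2 * π * k| < 1 / 100 := by
  have hmd : m ≤ d := by omega
  obtain ⟨hxball, hxhead, ℓ, hxtail⟩ := hx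
  obtain ⟨hξsph, hξhead, n, hNnorm, hξtail⟩ := hξ
  have hR0 : (0 : ℝ) < R := by linarith
  set r1 : ℝ := R ^ (-(1 : ℝ)) with hr1
  set rh : ℝ := R ^ (-(1 : ℝ) / 2) with hrh
  have hrh2 : rh * rh = r1 := by rw [hrh, hr1, ← Real.rpow_add hR0]; norm_num
  have hr1pos : 0 < r1 := Real.rpow_pos_of_pos hR0 _
  have hrhpos : 0 < rh := Real.rpow_pos_of_pos hR0 _
  have hRr1 : R * r1 = 1 := by
    rw [hr1, show (-(1:ℝ)) = (-1 : ℝ) by norm_num, Real.rpow_neg_one]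
    field_simp
  have hκr : R ^ (κ - 1) * R ^ (-κ) = r1 := by
    rw [hr1, ← Real.rpow_add hR0]; ring_nf
  have hr1le : r1 ≤ 1 := Real.rpow_le_one_of_one_le_of_nonpos hR.le (by norm_num)
  set a := headV m hmd x with hadef
  set b := headV m hmd ξ with hbdef
  set X := tailV m x with hXdef
  set Ξ := tailV m ξ with hΞdef
  set L : EuclideanSpace ℝ (Fin (d - m)) := R ^ (κ - 1) • intVec ℓ with hLdef
  set N : EuclideanSpace ℝ (Fin (d - m)) := (2 * π * R ^ (-κ)) • intVec n with hNdef
  set u := X - L with hudef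
  set v := Ξ - N with hvdef
  have ha : ‖a‖ < 1/1000 * rh := hxhead
  have hb : ‖b‖ < 1/1000 * rh := hξhead
  have hu : ‖u‖ < 1/1000 * r1 := hxtail
  have hv : ‖v‖ < 1/1000 * r1 := hξtail
  have hN1 : ‖N‖ = 1 := hNnorm
  have hxn : ‖x‖ < 1 := by rwa [mem_ball_zero_iff] at hxball
  have hXle : ‖X‖ ≤ ‖x‖ := tail_norm_le m hmd x
  have hL : ‖L‖ ≤ 1 + 1/1000 := by
    have : L = X - u := by rw [hudef]; abel
    rw [this]
    calc ‖X - u‖ ≤ ‖X‖ + ‖u‖ := norm_sub_le _ _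
      _ ≤ 1 + 1/1000 := by nlinarith
  refine ⟨∑ i, ℓ i * n i, ?_⟩
  set k : ℤ := ∑ i, ℓ i * n i with hkdef
  have hLN : (inner ℝ L N : ℝ) = 2 * π * k * r1 := by
    rw [hLdef, hNdef, real_inner_smul_left, real_inner_smul_right, inner_intVec, ← hkdef]
    linear_combination (2 * π * (k : ℝ)) * hκr
  have hXΞ : (inner ℝ X Ξ : ℝ) = inner ℝ L N + inner ℝ L v + inner ℝ u N + inner ℝ u v := by
    have hXe : X = L + u := by rw [hudef]; abel
    have hΞe : Ξ = N + v := by rw [hvdef]; abel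
    rw [hXe, hΞe]
    simp only [inner_add_left, inner_add_right]
    ring
  have hsplit : (inner ℝ x ξ : ℝ)
      = inner ℝ a b + inner ℝ L N + inner ℝ L v + inner ℝ u N + inner ℝ u v := by
    rw [inner_split m hmd x ξ, ← hadef, ← hbdef, ← hXdef, ← hΞdef, hXΞ]; ring
  set S : ℝ := inner ℝ a b + inner ℝ L v + inner ℝ u N + inner ℝ u v with hSdef
  have key : R * (inner ℝ x ξ : ℝ) - 2 * π * k = R * S := by
    rw [hsplit, hLN, hSdef]
    linear_combination (2 * π * (k : ℝ)) * hRr1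
  have B1 : |(inner ℝ a b : ℝ)| ≤ (1/1000)^2 * r1 := by
    calc |(inner ℝ a b : ℝ)| ≤ ‖a‖ * ‖b‖ := abs_real_inner_le_norm a b
      _ ≤ (1/1000 * rh) * (1/1000 * rh) :=
          mul_le_mul ha.le hb.le (norm_nonneg b) (by positivity)
      _ = (1/1000)^2 * r1 := by linear_combination (1/1000)^2 * hrh2
  have B2 : |(inner ℝ L v : ℝ)| ≤ (1 + 1/1000) * (1/1000 * r1) := by
    calc |(inner ℝ L v : ℝ)| ≤ ‖L‖ * ‖v‖ := abs_real_inner_le_norm L v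
      _ ≤ (1 + 1/1000) * (1/1000 * r1) :=
          mul_le_mul hL hv.le (norm_nonneg v) (by norm_num)
  have B3 : |(inner ℝ u N : ℝ)| ≤ 1/1000 * r1 := by
    calc |(inner ℝ u N : ℝ)| ≤ ‖u‖ * ‖N‖ := abs_real_inner_le_norm u N
      _ = ‖u‖ := by rw [hN1, mul_one]
      _ ≤ 1/1000 * r1 := hu.le
  have B4 : |(inner ℝ u v : ℝ)| ≤ (1/1000 * r1) * (1/1000 * r1) := by
    calc |(inner ℝ u v : ℝ)| ≤ ‖u‖ * ‖v‖ := abs_real_inner_le_norm u v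
      _ ≤ (1/1000 * r1) * (1/1000 * r1) :=
          mul_le_mul hu.le hv.le (norm_nonneg v) (by positivity)
  have hSabs : |S| ≤ |(inner ℝ a b : ℝ)| + |(inner ℝ L v : ℝ)| + |(inner ℝ u N : ℝ)|
      + |(inner ℝ u v : ℝ)| := by
    rw [hSdef]
    have h1 := abs_add_le ((inner ℝ a b : ℝ) + inner ℝ L v + inner ℝ u N) (inner ℝ u v)
    have h2 := abs_add_le ((inner ℝ a b : ℝ) + inner ℝ L v) (inner ℝ u N)
    have h3 := abs_add_le (inner ℝ a b : ℝ) (inner ℝ L v)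
    linarith
  have hStot : |S| ≤ (1/500 + 1/500000) * r1 + (1/1000000) * (r1 * r1) := by
    linarith
  rw [key, abs_mul, abs_of_pos hR0]
  calc R * |S| ≤ R * ((1/500 + 1/500000) * r1 + (1/1000000) * (r1 * r1)) :=
        mul_le_mul_of_nonneg_left hStot hR0.le
    _ = (1/500 + 1/500000) + (1/1000000) * r1 := by
        linear_combination ((1/500 + 1/500000) + (1/1000000) * r1) * hRr1
    _ < 1/100 := by linarith
end

section
/- Let d ≥ 4 be an integer, m an integer with 1 ≤ m < d/2, and α ∈ [d-m, d). Set κ = (d - α)/(2(d-m)) and let μ be the restriction of Lebesgue measure on ℝ^d to the set Λ defined in the context. Then there exist constants 0 < c₀ ≤ C₀ depending only on d, m, α such that for all R ≥ 2, c₀ R^{α-d} ≤ c_α(μ) ≤ C₀ R^{α-d}, where c_α(μ) := sup over x ∈ ℝ^d and r > 0 of μ(B(x,r))/r^α. -/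
open MeasureTheory Metric Real
open scoped ENNReal

/-!
Lower bound: `Λ` contains the ball of radius `P = R⁻¹/1000` about the origin, so
`c_α(μ) ≳ P^d / P^α = P^(d-α) ≳ R^(α-d)`.

Upper bound: with `s = R^(κ-1)` and `Q = R^(-1/2)/1000`, a ball `B(x, r)` meets only the
`(2(r + P)/s + 1)^(d-m)` slabs of `Λ` around lattice points `s ℓ` within `r + P` of `x''`, and
meets each of them inside a product of an `m`-ball of radius `min(r, Q)` and a `(d-m)`-ball of
radius `min(r, P)`. If `r ≤ s` there are at most `5^(d-m)` slabs and the total is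
`≲ r^m min(r, P)^(d-m) ≤ r^α P^(d-α)`. If `r ≥ s` the count is `≤ (5r/s)^(d-m)` and the total is
`≲ r^α Q^(d-α) (P/s)^(d-m)`; here the choice `κ (d-m) = (d-α)/2` balances
`(P/s)^(d-m) ≈ R^(-κ(d-m))` against `Q^(d-α) ≈ R^((α-d)/2)`.
-/

section Coordinates

variable {n : ℕ}

lemma norm_equiv_symm_comp_le {k : ℕ} {f : Fin k → Fin n} (hf : Function.Injective f)
    (v : EuclideanSpace ℝ (Fin n)) :
    ‖(EuclideanSpace.equiv (Fin k) ℝ).symm (fun i => v (f i))‖ ≤ ‖v‖ := by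
  rw [EuclideanSpace.norm_eq, EuclideanSpace.norm_eq]
  gcongr
  calc ∑ i, ‖v (f i)‖ ^ 2 = ∑ j ∈ Finset.univ.image f, ‖v j‖ ^ 2 := by
        rw [Finset.sum_image fun a _ b _ hab => hf hab]
    _ ≤ ∑ j, ‖v j‖ ^ 2 :=
        Finset.sum_le_sum_of_subset_of_nonneg (Finset.subset_univ _) fun j _ _ => sq_nonneg _

lemma norm_headV_le (m : ℕ) (h : m ≤ n) (v : EuclideanSpace ℝ (Fin n)) : ‖headV m h v‖ ≤ ‖v‖ :=
  norm_equiv_symm_comp_le (Fin.castLE_injective h) v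

lemma norm_tailV_le (m : ℕ) (v : EuclideanSpace ℝ (Fin n)) : ‖tailV m v‖ ≤ ‖v‖ :=
  norm_equiv_symm_comp_le (fun a b hab => by simpa [Fin.ext_iff] using hab) v

lemma headV_sub (m : ℕ) (h : m ≤ n) (x y : EuclideanSpace ℝ (Fin n)) :
    headV m h (x - y) = headV m h x - headV m h y := rfl

lemma tailV_sub (m : ℕ) (x y : EuclideanSpace ℝ (Fin n)) :
    tailV m (x - y) = tailV m x - tailV m y := rfl

lemma measurePreserving_headV_tailV (m : ℕ) (h : m ≤ n) :
    MeasurePreserving (fun y : EuclideanSpace ℝ (Fin n) => (headV m h y, tailV m y)) := by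
  let e : Fin n ≃ Fin m ⊕ Fin (n - m) := (finCongr (by omega)).trans finSumFinEquiv.symm
  have hsplit :=
    ((EuclideanSpace.volume_preserving_symm_measurableEquiv_toLp (Fin m)).symm.prod
      (EuclideanSpace.volume_preserving_symm_measurableEquiv_toLp (Fin (n - m))).symm).comp
    ((volume_measurePreserving_sumPiEquivProdPi fun _ => ℝ).comp
      ((volume_measurePreserving_piCongrLeft (fun _ => ℝ) e).comp
        (EuclideanSpace.volume_preserving_symm_measurableEquiv_toLp (Fin n))))
  rw [← Measure.volume_eq_prod] at hsplit
  convert hsplit using 1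
  funext y
  ext i
  · simp [headV, MeasurableEquiv.piCongrLeft, Equiv.piCongrLeft, e,
      MeasurableEquiv.sumPiEquivProdPi, Equiv.sumPiEquivProdPi, Equiv.piCongrLeft',
      EuclideanSpace.equiv, finSumFinEquiv, Fin.castLE]
    exact (eq_rec_constant _ _).symm
  · simp [tailV, MeasurableEquiv.piCongrLeft, Equiv.piCongrLeft, e,
      MeasurableEquiv.sumPiEquivProdPi, Equiv.sumPiEquivProdPi, Equiv.piCongrLeft',
      EuclideanSpace.equiv, finSumFinEquiv]
    exact (eq_rec_constant _ _).symm

end Coordinates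

lemma Int.card_Icc_ceil_floor_le {a b : ℝ} (hab : a ≤ b) :
    ((Finset.Icc ⌈a⌉ ⌊b⌋).card : ℝ) ≤ b - a + 1 := by
  rw [Int.card_Icc, ← Int.cast_natCast, Int.toNat_eq_max]
  push_cast
  exact max_le (by linarith [Int.floor_le b, Int.le_ceil a]) (by linarith)

lemma exists_finset_intVec_near {n : ℕ} (t : EuclideanSpace ℝ (Fin n)) {s ρ : ℝ} (hs : 0 < s)
    (hρ : 0 ≤ ρ) :
    ∃ S : Finset (Fin n → ℤ), (∀ ℓ, ‖t - s • intVec ℓ‖ < ρ → ℓ ∈ S) ∧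
      (S.card : ℝ) ≤ (2 * ρ / s + 1) ^ n := by
  refine ⟨Fintype.piFinset fun i => Finset.Icc ⌈(t i - ρ) / s⌉ ⌊(t i + ρ) / s⌋, ?_, ?_⟩
  · intro ℓ hℓ
    simp only [Fintype.mem_piFinset, Finset.mem_Icc, Int.ceil_le, Int.le_floor]
    intro i
    have hi : |t i - s * ℓ i| < ρ := (PiLp.norm_apply_le (t - s • intVec ℓ) i).trans_lt hℓ
    rw [abs_lt] at hi
    constructor
    · rw [div_le_iff₀ hs]; linarith
    · rw [le_div_iff₀ hs]; linarith
  · rw [Fintype.card_piFinset, Nat.cast_prod]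
    calc ∏ i, ((Finset.Icc ⌈(t i - ρ) / s⌉ ⌊(t i + ρ) / s⌋).card : ℝ)
        ≤ ∏ _i : Fin n, (2 * ρ / s + 1) := by
          gcongr with i
          refine (Int.card_Icc_ceil_floor_le (by gcongr; linarith)).trans_eq ?_
          ring
      _ = (2 * ρ / s + 1) ^ n := by simp

lemma MeasureTheory.Measure.addHaar_ball_inter_ball_le {E : Type*} [NormedAddCommGroup E] [MeasurableSpace E]
    [BorelSpace E] (μ : Measure E) [μ.IsAddHaarMeasure] (a b : E) (s u : ℝ) :
    μ (ball a s ∩ ball b u) ≤ μ (ball 0 (min s u)) := by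
  rcases le_total s u with hsu | hus
  · rw [min_eq_left hsu, ← Measure.addHaar_ball_center μ a]
    exact measure_mono Set.inter_subset_left
  · rw [min_eq_right hus, ← Measure.addHaar_ball_center μ b]
    exact measure_mono Set.inter_subset_right

lemma EuclideanSpace.volume_ball_inter_ball_le {k : ℕ} (a b : EuclideanSpace ℝ (Fin k)) {s u : ℝ} (hs : 0 < s)
    (hu : 0 < u) :
    volume (ball a s ∩ ball b u) ≤
      ENNReal.ofReal (min s u ^ k) * volume (ball (0 : EuclideanSpace ℝ (Fin k)) 1) := by
  refine (Measure.addHaar_ball_inter_ball_le volume a b s u).trans_eq ?_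
  rw [Measure.addHaar_ball_of_pos volume _ (lt_min hs hu), finrank_euclideanSpace_fin]

section LambdaS

variable {d m : ℕ} (h : m ≤ d) (κ R : ℝ)

lemma ball_subset_LambdaS (hR : 1 ≤ R) :
    ball (0 : EuclideanSpace ℝ (Fin d)) ((1 / 1000) * R ^ (-(1 : ℝ))) ⊆ LambdaS d m h κ R := by
  intro y hy
  rw [mem_ball_zero_iff] at hy
  have hR1 : R ^ (-(1 : ℝ)) ≤ 1 := rpow_le_one_of_one_le_of_nonpos hR (by norm_num)
  have hR2 : R ^ (-(1 : ℝ)) ≤ R ^ (-(1 : ℝ) / 2) := rpow_le_rpow_of_exponent_le hR (by norm_num)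
  refine ⟨mem_ball_zero_iff.2 (by linarith), by linarith [norm_headV_le m h y], 0, ?_⟩
  have hzero : intVec (0 : Fin (d - m) → ℤ) = 0 := by ext; simp [intVec]
  rw [hzero, smul_zero, sub_zero]
  exact (norm_tailV_le m y).trans_lt hy

lemma ball_inter_LambdaS_subset (x : EuclideanSpace ℝ (Fin d)) (r : ℝ)
    {S : Finset (Fin (d - m) → ℤ)}
    (hS : ∀ ℓ, ‖tailV m x - R ^ (κ - 1) • intVec ℓ‖ < r + (1 / 1000) * R ^ (-(1 : ℝ)) → ℓ ∈ S) :
    ball x r ∩ LambdaS d m h κ R ⊆ ⋃ ℓ ∈ S, (fun y => (headV m h y, tailV m y)) ⁻¹'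
      ((ball (headV m h x) r ∩ ball 0 ((1 / 1000) * R ^ (-(1 : ℝ) / 2))) ×ˢ
        (ball (tailV m x) r ∩ ball (R ^ (κ - 1) • intVec ℓ) ((1 / 1000) * R ^ (-(1 : ℝ))))) := by
  rintro y ⟨hyx, -, hy', ℓ, hy''⟩
  rw [mem_ball, dist_eq_norm] at hyx
  have htail : ‖tailV m y - tailV m x‖ < r := by
    rw [← tailV_sub]; exact (norm_tailV_le m _).trans_lt hyx
  refine Set.mem_biUnion (hS ℓ ?_) ⟨⟨?_, mem_ball_zero_iff.2 hy'⟩, ?_, ?_⟩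
  · calc ‖tailV m x - R ^ (κ - 1) • intVec ℓ‖
        ≤ ‖tailV m x - tailV m y‖ + ‖tailV m y - R ^ (κ - 1) • intVec ℓ‖ :=
          norm_sub_le_norm_sub_add_norm_sub _ _ _
      _ < r + (1 / 1000) * R ^ (-(1 : ℝ)) := by rw [norm_sub_rev] at htail; gcongr
  · rw [mem_ball, dist_eq_norm, ← headV_sub]; exact (norm_headV_le m h _).trans_lt hyx
  · rwa [mem_ball, dist_eq_norm]
  · rwa [mem_ball, dist_eq_norm]

lemma volume_ball_inter_LambdaS_le (hR : 0 < R) (x : EuclideanSpace ℝ (Fin d)) {r : ℝ}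
    (hr : 0 < r) :
    volume (ball x r ∩ LambdaS d m h κ R) ≤
      ENNReal.ofReal ((2 * (r + (1 / 1000) * R ^ (-(1 : ℝ))) / R ^ (κ - 1) + 1) ^ (d - m) *
          min r ((1 / 1000) * R ^ (-(1 : ℝ) / 2)) ^ m *
          min r ((1 / 1000) * R ^ (-(1 : ℝ))) ^ (d - m)) *
        (volume (ball (0 : EuclideanSpace ℝ (Fin m)) 1) *
          volume (ball (0 : EuclideanSpace ℝ (Fin (d - m))) 1)) := by
  set P : ℝ := (1 / 1000) * R ^ (-(1 : ℝ))
  set Q : ℝ := (1 / 1000) * R ^ (-(1 : ℝ) / 2)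
  have hP : 0 < P := by positivity
  have hQ : 0 < Q := by positivity
  obtain ⟨S, hS, hcard⟩ := exists_finset_intVec_near (tailV m x) (rpow_pos_of_pos hR (κ - 1))
    (by positivity : 0 ≤ r + P)
  have hcell : ∀ ℓ : Fin (d - m) → ℤ,
      volume ((fun y => (headV m h y, tailV m y)) ⁻¹' ((ball (headV m h x) r ∩ ball 0 Q) ×ˢ
        (ball (tailV m x) r ∩ ball (R ^ (κ - 1) • intVec ℓ) P))) ≤
      ENNReal.ofReal (min r Q ^ m) * volume (ball (0 : EuclideanSpace ℝ (Fin m)) 1) *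
        (ENNReal.ofReal (min r P ^ (d - m)) *
          volume (ball (0 : EuclideanSpace ℝ (Fin (d - m))) 1)) := by
    intro ℓ
    rw [(measurePreserving_headV_tailV m h).measure_preimage
      ((measurableSet_ball.inter measurableSet_ball).prod
        (measurableSet_ball.inter measurableSet_ball)).nullMeasurableSet,
      Measure.volume_eq_prod, Measure.prod_prod]
    gcongr <;> exact EuclideanSpace.volume_ball_inter_ball_le _ _ hr (by assumption)
  calc volume (ball x r ∩ LambdaS d m h κ R)
      ≤ ∑ ℓ ∈ S, volume ((fun y => (headV m h y, tailV m y)) ⁻¹'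
          ((ball (headV m h x) r ∩ ball 0 Q) ×ˢ
            (ball (tailV m x) r ∩ ball (R ^ (κ - 1) • intVec ℓ) P))) :=
        (measure_mono (ball_inter_LambdaS_subset h κ R x r hS)).trans
          (measure_biUnion_finset_le _ _)
    _ ≤ S.card • (ENNReal.ofReal (min r Q ^ m) * volume (ball (0 : EuclideanSpace ℝ (Fin m)) 1) *
          (ENNReal.ofReal (min r P ^ (d - m)) *
            volume (ball (0 : EuclideanSpace ℝ (Fin (d - m))) 1))) :=
        Finset.sum_le_card_nsmul _ _ _ fun ℓ _ => hcell ℓ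
    _ ≤ ENNReal.ofReal ((2 * (r + P) / R ^ (κ - 1) + 1) ^ (d - m)) *
          (ENNReal.ofReal (min r Q ^ m) * volume (ball (0 : EuclideanSpace ℝ (Fin m)) 1) *
          (ENNReal.ofReal (min r P ^ (d - m)) *
            volume (ball (0 : EuclideanSpace ℝ (Fin (d - m))) 1))) := by
        rw [nsmul_eq_mul, ← ENNReal.ofReal_natCast]
        gcongr
    _ = _ := by
        rw [ENNReal.ofReal_mul (by positivity), ENNReal.ofReal_mul (by positivity)]
        ring

end LambdaS

lemma min_rpow_le_rpow_mul_rpow {r a p q : ℝ} (hr : 0 < r) (ha : 0 < a) (hq : 0 ≤ q)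
    (hqp : q ≤ p) : min r a ^ p ≤ r ^ q * a ^ (p - q) := by
  calc min r a ^ p = min r a ^ q * min r a ^ (p - q) := by
        rw [← rpow_add (lt_min hr ha), add_sub_cancel]
    _ ≤ r ^ q * a ^ (p - q) := by
        gcongr <;> first | exact min_le_left r a | exact min_le_right r a

lemma mul_rpow_rpow_le_rpow {c R t e : ℝ} (hc0 : 0 ≤ c) (hc1 : c ≤ 1) (hR : 0 < R)
    (he : 0 ≤ e) : (c * R ^ t) ^ e ≤ R ^ (t * e) := by
  rw [mul_rpow hc0 (rpow_nonneg hR.le t), ← rpow_mul hR.le]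
  exact mul_le_of_le_one_left (rpow_nonneg hR.le _) (rpow_le_one hc0 hc1 he)

lemma covering_bound_le {a b α r P Q s T : ℝ} (haα : a ≤ α) (hbα : b ≤ α) (hα : α ≤ a + b)
    (hr : 0 < r) (hP : 0 < P) (hPs : P ≤ s) (hQ : 0 < Q) (hPT : P ^ (a + b - α) ≤ T)
    (hQT : Q ^ (a + b - α) * (P / s) ^ b ≤ T) :
    (2 * (r + P) / s + 1) ^ b * min r Q ^ a * min r P ^ b ≤ 5 ^ b * r ^ α * T := by
  have hs : 0 < s := hP.trans_le hPs
  have ha : 0 ≤ a := by linarith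
  have hb : 0 ≤ b := by linarith
  rcases le_total r s with hrs | hsr
  · have hN : 2 * (r + P) / s + 1 ≤ 5 := by
      rw [div_add_one hs.ne', div_le_iff₀ hs]; linarith
    calc (2 * (r + P) / s + 1) ^ b * min r Q ^ a * min r P ^ b
        ≤ 5 ^ b * r ^ a * (r ^ (α - a) * P ^ (b - (α - a))) := by
          gcongr
          · exact min_le_left r Q
          · exact min_rpow_le_rpow_mul_rpow hr hP (by linarith) (by linarith)
      _ = 5 ^ b * r ^ α * P ^ (a + b - α) := by
          rw [mul_assoc (5 ^ b), ← mul_assoc (r ^ a), ← rpow_add hr]; ring_nf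
      _ ≤ 5 ^ b * r ^ α * T := by gcongr
  · have hN : (2 * (r + P) / s + 1) * min r P ≤ 5 * r * (P / s) := by
      calc (2 * (r + P) / s + 1) * min r P ≤ (5 * r / s) * P := by
            gcongr
            · rw [div_add_one hs.ne']; gcongr; linarith
            · exact min_le_right r P
        _ = 5 * r * (P / s) := by ring
    calc (2 * (r + P) / s + 1) ^ b * min r Q ^ a * min r P ^ b
        = ((2 * (r + P) / s + 1) * min r P) ^ b * min r Q ^ a := by
          rw [mul_rpow (by positivity) (le_min hr.le hP.le)]; ring
      _ ≤ (5 * r * (P / s)) ^ b * (r ^ (α - b) * Q ^ (a - (α - b))) := by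
          gcongr
          exact min_rpow_le_rpow_mul_rpow hr hQ (by linarith) (by linarith)
      _ = 5 ^ b * (r ^ b * r ^ (α - b)) * (Q ^ (a + b - α) * (P / s) ^ b) := by
          rw [mul_rpow (by positivity) (by positivity), mul_rpow (by norm_num) hr.le]; ring_nf
      _ = 5 ^ b * r ^ α * (Q ^ (a + b - α) * (P / s) ^ b) := by
          rw [← rpow_add hr, add_sub_cancel]
      _ ≤ 5 ^ b * r ^ α * T := by gcongr

lemma covering_bound_LambdaS_le {d m : ℕ} (hm : 2 * m ≤ d) {α κ R r : ℝ} (hα1 : (d : ℝ) - m ≤ α)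
    (hα2 : α ≤ d) (hκ0 : 0 ≤ κ) (hκ : κ * ((d : ℝ) - m) = ((d : ℝ) - α) / 2) (hR : 1 ≤ R)
    (hr : 0 < r) :
    (2 * (r + (1 / 1000) * R ^ (-(1 : ℝ))) / R ^ (κ - 1) + 1) ^ (d - m) *
        min r ((1 / 1000) * R ^ (-(1 : ℝ) / 2)) ^ m * min r ((1 / 1000) * R ^ (-(1 : ℝ))) ^ (d - m)
      ≤ 5 ^ (d - m) * r ^ α * R ^ (α - d) := by
  have hR0 : 0 < R := by linarith
  have hdm : ((d - m : ℕ) : ℝ) = (d : ℝ) - m := by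
    rw [Nat.cast_sub (by omega)]
  have hmα : (m : ℝ) ≤ α := by
    have : (2 * m : ℝ) ≤ d := by exact_mod_cast hm
    linarith
  simp only [← rpow_natCast, hdm]
  have hPs : (1 / 1000) * R ^ (-(1 : ℝ)) / R ^ (κ - 1) = (1 / 1000) * R ^ (-κ) := by
    rw [mul_div_assoc, ← rpow_sub hR0]; ring_nf
  refine covering_bound_le hmα (by linarith) (by linarith) hr (by positivity) ?_ (by positivity)
    ?_ ?_
  · calc (1 / 1000) * R ^ (-(1 : ℝ)) ≤ 1 * R ^ (κ - 1) := by
          gcongr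
          · norm_num
          · linarith
      _ = R ^ (κ - 1) := one_mul _
  · calc ((1 / 1000) * R ^ (-(1 : ℝ))) ^ ((m : ℝ) + (d - m) - α)
        ≤ R ^ (-(1 : ℝ) * ((m : ℝ) + (d - m) - α)) :=
          mul_rpow_rpow_le_rpow (by norm_num) (by norm_num) hR0 (by linarith)
      _ = R ^ (α - d) := by ring_nf
  · rw [hPs]
    calc ((1 / 1000) * R ^ (-(1 : ℝ) / 2)) ^ ((m : ℝ) + (d - m) - α) *
          ((1 / 1000) * R ^ (-κ)) ^ ((d : ℝ) - m)
        ≤ R ^ (-(1 : ℝ) / 2 * ((m : ℝ) + (d - m) - α)) * R ^ (-κ * ((d : ℝ) - m)) := by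
          gcongr
          · exact mul_rpow_rpow_le_rpow (by norm_num) (by norm_num) hR0 (by linarith)
          · exact mul_rpow_rpow_le_rpow (by norm_num) (by norm_num) hR0 (by linarith)
      _ = R ^ (α - d) := by
          rw [← rpow_add hR0, neg_mul, hκ]; ring_nf

section cAlpha

variable {d : ℕ} {α : ℝ} {μ : Measure (EuclideanSpace ℝ (Fin d))}

lemma le_cAlpha (x : EuclideanSpace ℝ (Fin d)) {r : ℝ} (hr : 0 < r) :
    μ (ball x r) / ENNReal.ofReal (r ^ α) ≤ cAlpha α μ :=
  le_iSup_of_le x <| le_iSup₂_of_le r hr le_rfl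

lemma cAlpha_le_ofReal {C : ℝ}
    (hμ : ∀ x r, 0 < r → μ (ball x r) ≤ ENNReal.ofReal (C * r ^ α)) :
    cAlpha α μ ≤ ENNReal.ofReal C :=
  iSup_le fun x => iSup₂_le fun r hr => ENNReal.div_le_of_le_mul <|
    (hμ x r hr).trans_eq (ENNReal.ofReal_mul' (rpow_nonneg hr.le α))

end cAlpha

lemma ofReal_le_cAlpha_restrict_LambdaS {d m : ℕ} (h : m ≤ d) (κ : ℝ) {α R : ℝ} (hα0 : 0 ≤ α)
    (hR : 1 ≤ R) :
    ENNReal.ofReal ((1 / 1000) ^ d * (volume (ball (0 : EuclideanSpace ℝ (Fin d)) 1)).toReal *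
        R ^ (α - d)) ≤ cAlpha α (volume.restrict (LambdaS d m h κ R)) := by
  have hR0 : 0 < R := by linarith
  set V := volume (ball (0 : EuclideanSpace ℝ (Fin d)) 1)
  set r₀ : ℝ := (1 / 1000) * R ^ (-(1 : ℝ))
  have hr₀ : 0 < r₀ := by positivity
  have hμ : volume.restrict (LambdaS d m h κ R) (ball 0 r₀) / ENNReal.ofReal (r₀ ^ α) =
      ENNReal.ofReal (r₀ ^ ((d : ℝ) - α) * V.toReal) := by
    rw [Measure.restrict_apply measurableSet_ball,
      Set.inter_eq_left.2 (ball_subset_LambdaS h κ R hR), Measure.addHaar_ball_of_pos _ _ hr₀,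
      finrank_euclideanSpace_fin, ← ENNReal.ofReal_toReal measure_ball_lt_top.ne,
      ← ENNReal.ofReal_mul (by positivity), ← ENNReal.ofReal_div_of_pos (rpow_pos_of_pos hr₀ α),
      rpow_sub hr₀, rpow_natCast, mul_div_right_comm]
  have hr₀_rpow : r₀ ^ ((d : ℝ) - α) = (1 / 1000) ^ ((d : ℝ) - α) * R ^ (α - d) := by
    rw [mul_rpow (by norm_num) (rpow_nonneg hR0.le _), ← rpow_mul hR0.le]; ring_nf
  refine le_trans ?_ (hμ ▸ le_cAlpha 0 hr₀)
  refine ENNReal.ofReal_le_ofReal ?_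
  rw [hr₀_rpow, mul_right_comm]
  gcongr
  rw [← rpow_natCast]
  exact rpow_le_rpow_of_exponent_ge (by norm_num) (by norm_num) (by linarith)

lemma cAlpha_restrict_LambdaS_le {d m : ℕ} (hmd : m < d) (hm : 2 * m ≤ d) {α R : ℝ}
    (hα1 : (d : ℝ) - m ≤ α) (hα2 : α ≤ d) (hR : 1 ≤ R) :
    cAlpha α (volume.restrict (LambdaS d m hmd.le (((d : ℝ) - α) / (2 * ((d : ℝ) - m))) R)) ≤
      ENNReal.ofReal (5 ^ (d - m) * (volume (ball (0 : EuclideanSpace ℝ (Fin m)) 1) *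
          volume (ball (0 : EuclideanSpace ℝ (Fin (d - m))) 1)).toReal * R ^ (α - d)) := by
  have hdm : (0 : ℝ) < d - m := sub_pos.2 (by exact_mod_cast hmd)
  have hκ : ((d : ℝ) - α) / (2 * ((d : ℝ) - m)) * ((d : ℝ) - m) = ((d : ℝ) - α) / 2 := by
    field_simp
  have hκ0 : 0 ≤ ((d : ℝ) - α) / (2 * ((d : ℝ) - m)) := div_nonneg (by linarith) (by positivity)
  set V := volume (ball (0 : EuclideanSpace ℝ (Fin m)) 1) *
    volume (ball (0 : EuclideanSpace ℝ (Fin (d - m))) 1)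
  have hV : V ≠ ⊤ := ENNReal.mul_ne_top measure_ball_lt_top.ne measure_ball_lt_top.ne
  refine cAlpha_le_ofReal fun x r hr => ?_
  rw [Measure.restrict_apply measurableSet_ball]
  calc _ ≤ _ := volume_ball_inter_LambdaS_le _ _ R (by linarith) x hr
    _ ≤ ENNReal.ofReal (5 ^ (d - m) * r ^ α * R ^ (α - d)) * V := by
        gcongr ENNReal.ofReal ?_ * _
        exact covering_bound_LambdaS_le hm hα1 hα2 hκ0 hκ hR hr
    _ = ENNReal.ofReal (5 ^ (d - m) * V.toReal * R ^ (α - d) * r ^ α) := by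
        rw [← ENNReal.ofReal_toReal hV, ← ENNReal.ofReal_mul (by positivity),
          ENNReal.toReal_ofReal ENNReal.toReal_nonneg]
        ring_nf

theorem stmt14 (d m : ℕ) (hm2 : 2 * m < d)
    (α : ℝ) (hα1 : (d : ℝ) - m ≤ α) (hα2 : α < d) :
    ∃ c₀ C₀ : ℝ, 0 < c₀ ∧ c₀ ≤ C₀ ∧
      ∀ R : ℝ, 2 ≤ R →
        ENNReal.ofReal (c₀ * R ^ (α - d)) ≤
            cAlpha α (volume.restrict
              (LambdaS d m (by omega) (((d : ℝ) - α) / (2 * ((d : ℝ) - m))) R)) ∧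
          cAlpha α (volume.restrict
              (LambdaS d m (by omega) (((d : ℝ) - α) / (2 * ((d : ℝ) - m))) R)) ≤
            ENNReal.ofReal (C₀ * R ^ (α - d)) := by
  have hα0 : 0 ≤ α := by
    have : (m : ℝ) < d := by exact_mod_cast (by omega : m < d)
    linarith
  set c₀ : ℝ := (1 / 1000) ^ d * (volume (ball (0 : EuclideanSpace ℝ (Fin d)) 1)).toReal
  set C₁ : ℝ := 5 ^ (d - m) * (volume (ball (0 : EuclideanSpace ℝ (Fin m)) 1) *
    volume (ball (0 : EuclideanSpace ℝ (Fin (d - m))) 1)).toReal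
  have hc₀ : 0 < c₀ :=
    mul_pos (by positivity) (ENNReal.toReal_pos (measure_ball_pos _ _ one_pos).ne'
      measure_ball_lt_top.ne)
  refine ⟨c₀, max c₀ C₁, hc₀, le_max_left _ _, fun R hR => ⟨?_, ?_⟩⟩
  · exact ofReal_le_cAlpha_restrict_LambdaS _ _ hα0 (by linarith)
  · refine (cAlpha_restrict_LambdaS_le (by omega) hm2.le hα1 hα2.le (by linarith)).trans ?_
    gcongr
    exact le_max_right _ _
end
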